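/- Suppose ‖A‖ ≤ 1 (operator norm), ‖b‖ = 1, T ≥ 1, 0 ≤ η, η·T < 1/12, and the initial point is chosen as x₀ = (1 − 3·η·T) • b. Then the success probability p := (1/16^T) · (∏ t in Finset.range (T+1), ⟪b, x t⟫)² · ‖x T‖² satisfies p ≥ (1/16^T) · (1/4) · (1/2)^(2T) · (1/4). -/

import Mathlib

/-!
Write `g(x) = x + A†(A x - b)` for the gradient. Since `‖A‖ ≤ 1` and `‖b‖ = 1`, every step has
length `η ‖g(x)‖ ≤ η (2‖x‖ + 1) ≤ 3η` as long as the iterate stays in the unit ball. Starting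
from `‖x₀‖ = 1 - 3ηT`, the first `T` steps therefore never leave the unit ball and move the
iterate by at most `3ηt` after `t` steps. Hence `⟪b, x t⟫ ≥ 1 - 6ηT > 1/2` for `t ≤ T`, and in
particular `‖x T‖ ≥ ⟪b, x T⟫ > 1/2`.
-/

open scoped RealInnerProductSpace

theorem norm_add_adjoint_apply_sub_le {E : Type*} [NormedAddCommGroup E]
    [InnerProductSpace ℝ E] [CompleteSpace E] {A : E →L[ℝ] E} (hA : ‖A‖ ≤ 1) (x b : E) :
    ‖x + ContinuousLinearMap.adjoint A (A x - b)‖ ≤ 2 * ‖x‖ + ‖b‖ := by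
  have hAx : ‖A x‖ ≤ ‖x‖ := by simpa using A.le_of_opNorm_le hA x
  have hadj : ‖ContinuousLinearMap.adjoint A (A x - b)‖ ≤ ‖A x - b‖ := by
    rw [← ContinuousLinearMap.adjoint.norm_map] at hA
    simpa using (ContinuousLinearMap.adjoint A).le_of_opNorm_le hA (A x - b)
  calc ‖x + ContinuousLinearMap.adjoint A (A x - b)‖
      ≤ ‖x‖ + ‖A x - b‖ := (norm_add_le _ _).trans (by gcongr)
    _ ≤ ‖x‖ + (‖A x‖ + ‖b‖) := add_le_add_right (norm_sub_le _ _) _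
    _ ≤ 2 * ‖x‖ + ‖b‖ := by linarith

theorem norm_sub_initial_le_of_step_le {F : Type*} [SeminormedAddCommGroup F] {x : ℕ → F}
    {δ R : ℝ} {T : ℕ} (hδ : 0 ≤ δ) (hR : ‖x 0‖ + δ * T ≤ R)
    (hstep : ∀ t, ‖x t‖ ≤ R → ‖x (t + 1) - x t‖ ≤ δ) :
    ∀ t ≤ T, ‖x t - x 0‖ ≤ δ * t := by
  intro t ht
  induction t with
  | zero => simp
  | succ t ih =>
    have hdrift := ih (by omega)
    have hball : ‖x t‖ ≤ R := by
      have : δ * t ≤ δ * T := mul_le_mul_of_nonneg_left (by exact_mod_cast (by omega : t ≤ T)) hδ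
      linarith [norm_le_norm_add_norm_sub' (x t) (x 0)]
    calc ‖x (t + 1) - x 0‖ ≤ ‖x (t + 1) - x t‖ + ‖x t - x 0‖ :=
          norm_sub_le_norm_sub_add_norm_sub _ _ _
      _ ≤ δ * ↑(t + 1) := by push_cast; linarith [hstep t hball]

theorem success_probability_explicit_lower_bound_general (n : ℕ)
    (A : EuclideanSpace ℝ (Fin n) →L[ℝ] EuclideanSpace ℝ (Fin n))
    (b : EuclideanSpace ℝ (Fin n)) (hb : ‖b‖ = 1)
    (hA : ‖A‖ ≤ 1)
    (η : ℝ) (hη : 0 ≤ η) (T : ℕ) (hηT : η * T < 1 / 12)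
    (x₀ : EuclideanSpace ℝ (Fin n)) (hx₀ : x₀ = (1 - 3 * η * T) • b)
    (x : ℕ → EuclideanSpace ℝ (Fin n))
    (hx0 : x 0 = x₀)
    (hx : ∀ t, x (t + 1) = x t - η • (x t + (ContinuousLinearMap.adjoint A) (A (x t) - b))) :
    (1 / 16 ^ T) * (∏ t ∈ Finset.range (T + 1), ⟪b, x t⟫) ^ 2 * ‖x T‖ ^ 2 ≥
      (1 / 16 ^ T) * (1 / 4) * (1 / 2) ^ (2 * T) * (1 / 4) := by
  have hx0b : x 0 = (1 - 3 * η * T) • b := hx0.trans hx₀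
  have hnorm0 : ‖x 0‖ = 1 - 3 * η * T := by
    rw [hx0b, norm_smul, hb, mul_one, Real.norm_of_nonneg (by linarith)]
  have hstep : ∀ t, ‖x t‖ ≤ 1 → ‖x (t + 1) - x t‖ ≤ 3 * η := fun t ht => by
    rw [hx t, sub_sub_cancel_left, norm_neg, norm_smul, Real.norm_of_nonneg hη]
    nlinarith [norm_add_adjoint_apply_sub_le hA (x t) b]
  have hdrift := norm_sub_initial_le_of_step_le (by linarith) (by linarith) hstep
  have hinner : ∀ t ≤ T, 1 / 2 ≤ ⟪b, x t⟫ := fun t ht => by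
    have hbx0 : ⟪b, x 0⟫ = 1 - 3 * η * T := by
      rw [hx0b, real_inner_smul_right, real_inner_self_eq_norm_sq, hb]; ring
    have hmove : ⟪b, x 0 - x t⟫ ≤ 3 * η * t :=
      (real_inner_le_norm _ _).trans (by rw [hb, one_mul, norm_sub_rev]; exact hdrift t ht)
    have : (t : ℝ) ≤ T := by exact_mod_cast ht
    rw [inner_sub_right] at hmove
    nlinarith
  have hprod : (1 / 2 : ℝ) ^ (T + 1) ≤ ∏ t ∈ Finset.range (T + 1), ⟪b, x t⟫ := by
    simpa using Finset.prod_le_prod (s := Finset.range (T + 1)) (fun _ _ => by norm_num)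
      (fun t ht => hinner t (Nat.lt_succ_iff.mp (Finset.mem_range.mp ht)))
  have hxT : 1 / 2 ≤ ‖x T‖ :=
    (hinner T le_rfl).trans (by simpa [hb] using real_inner_le_norm b (x T))
  calc (1 / 16 ^ T) * (1 / 4) * (1 / 2) ^ (2 * T) * (1 / 4)
      = (1 / 16 ^ T) * ((1 / 2 : ℝ) ^ (T + 1)) ^ 2 * (1 / 2) ^ 2 := by ring
    _ ≤ (1 / 16 ^ T) * (∏ t ∈ Finset.range (T + 1), ⟪b, x t⟫) ^ 2 * ‖x T‖ ^ 2 := by gcongr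

theorem success_probability_explicit_lower_bound (n : ℕ)
    (A : EuclideanSpace ℝ (Fin n) →L[ℝ] EuclideanSpace ℝ (Fin n))
    (b : EuclideanSpace ℝ (Fin n)) (hb : ‖b‖ = 1)
    (f : EuclideanSpace ℝ (Fin n) → ℝ)
    (hf : ∀ x, f x = (1/2) * ‖x‖^2 + (1/2) * ‖A x - b‖^2)
    (hA : ‖A‖ ≤ 1)
    (η : ℝ) (hη : 0 ≤ η) (T : ℕ) (hT : 1 ≤ T) (hηT : η * T < 1 / 12)
    (x₀ : EuclideanSpace ℝ (Fin n)) (hx₀ : x₀ = (1 - 3 * η * T) • b)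
    (x : ℕ → EuclideanSpace ℝ (Fin n))
    (hx0 : x 0 = x₀)
    (hx : ∀ t, x (t + 1) = x t - η • (x t + (ContinuousLinearMap.adjoint A) (A (x t) - b))) :
    (1 / 16 ^ T) * (∏ t ∈ Finset.range (T + 1), ⟪b, x t⟫) ^ 2 * ‖x T‖ ^ 2 ≥
      (1 / 16 ^ T) * (1 / 4) * (1 / 2) ^ (2 * T) * (1 / 4) :=
  success_probability_explicit_lower_bound_general n A b hb hA η hη T hηT x₀ hx₀ x hx0 hx
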